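/- Let G₀ be an invertible symmetric 2×2 real matrix, let γ₀ be a symmetric 2×2 real matrix such that G := G₀ + 2·γ₀ is invertible, and set C = G·G₀⁻¹, I₁ = trace(C) − 2, I₂ = det(C) − 1. Let w : ℝ × ℝ → ℝ be differentiable at (I₁, I₂) with partial derivatives w₁ = ∂w/∂I₁ and w₂ = ∂w/∂I₂. Then the function γ ↦ w( trace((G₀+2γ)·G₀⁻¹) − 2 , det((G₀+2γ)·G₀⁻¹) − 1 ) is Fréchet differentiable at γ₀ with derivative K ↦ trace(Sᵀ·K), where S = 2·w₁·G₀⁻¹ + 2·w₂·det(C)·G⁻¹. That is, the second Piola–Kirchhoff stress tensor is S = 2(∂W/∂I₁)G₀⁻¹ + 2(∂W/∂I₂)det(C)·G⁻¹. -/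

import Mathlib

/-!
By the chain rule it suffices to differentiate `C = (G₀ + 2γ)G₀⁻¹` and its two invariants.
In the direction `K` the derivative of `C` is `2KG₀⁻¹`; the trace is linear, and Jacobi's formula
`d(det C) = tr(adj C · dC)` together with `adj C = det C · C⁻¹ = det C · G₀G⁻¹` and cyclicity of the
trace turns the determinant part into `2 det C · tr(G⁻¹K)`. Finally `S` is symmetric because `G₀`
and `γ₀` are, so `tr(SK) = tr(SᵀK)`.
-/

open Matrix

attribute [local instance] Matrix.normedAddCommGroup Matrix.normedSpace

namespace Matrix

theorem adjugate_eq_det_smul_inv {n α : Type*} [Fintype n] [DecidableEq n] [CommRing α]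
    {A : Matrix n n α} (h : IsUnit A.det) : A.adjugate = A.det • A⁻¹ := by
  rw [inv_def, smul_smul, Ring.mul_inverse_cancel _ h, one_smul]

theorem trace_inv_mul_mul_inv {n α : Type*} [Fintype n] [DecidableEq n] [CommRing α]
    (A K : Matrix n n α) {B : Matrix n n α} (hB : IsUnit B.det) :
    ((A * B⁻¹)⁻¹ * (K * B⁻¹)).trace = (A⁻¹ * K).trace := by
  rw [mul_inv_rev, nonsing_inv_nonsing_inv B hB, trace_mul_cycle, Matrix.mul_assoc K,
    nonsing_inv_mul B hB, Matrix.mul_one, trace_mul_comm]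

variable {𝕜 : Type*} [NontriviallyNormedField 𝕜] [CompleteSpace 𝕜]

theorem hasFDerivAt_det_fin_two (M : Matrix (Fin 2) (Fin 2) 𝕜) :
    HasFDerivAt det
      (traceLinearMap (Fin 2) 𝕜 𝕜 ∘ₗ LinearMap.mulLeft 𝕜 M.adjugate).toContinuousLinearMap M := by
  have hentry (i j : Fin 2) : HasFDerivAt (fun N : Matrix (Fin 2) (Fin 2) 𝕜 => N i j)
      (entryLinearMap 𝕜 𝕜 i j).toContinuousLinearMap M :=
    (entryLinearMap 𝕜 𝕜 i j).toContinuousLinearMap.hasFDerivAt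
  refine ((((hentry 0 0).mul (hentry 1 1)).sub ((hentry 0 1).mul (hentry 1 0))).congr_fderiv
    ?_).congr_of_eventuallyEq (.of_forall det_fin_two)
  refine ContinuousLinearMap.ext fun K => ?_
  change M 0 0 * K 1 1 + M 1 1 * K 0 0 - (M 0 1 * K 1 0 + M 1 0 * K 0 1) = (M.adjugate * K).trace
  simp [adjugate_fin_two, trace_fin_two, vecMul, dotProduct, Fin.sum_univ_two]
  ring

theorem hasFDerivAt_add_smul_mul_const {n : Type*} [Fintype n] [DecidableEq n]
    (A B X₀ : Matrix n n 𝕜) (c : 𝕜) :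
    HasFDerivAt (fun X => (A + c • X) * B)
      (c • (LinearMap.mulRight 𝕜 B).toContinuousLinearMap) X₀ := by
  refine ((((LinearMap.mulRight 𝕜 B).toContinuousLinearMap.hasFDerivAt (x := X₀)).const_smul
    c).const_add (A * B)).congr_of_eventuallyEq (.of_forall fun X => ?_)
  simp [Matrix.add_mul]

end Matrix

/-- The second Piola–Kirchhoff stress tensor of an invariant-based energy
`W = w(I₁, I₂)`, with `I₁ = tr(C) − 2`, `I₂ = det(C) − 1`, `C = G·G₀⁻¹`, `G = G₀ + 2γ`:
the map `γ ↦ w(tr((G₀+2γ)G₀⁻¹) − 2, det((G₀+2γ)G₀⁻¹) − 1)` is Fréchet differentiable at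
`γ₀` with gradient `S = 2·w₁·G₀⁻¹ + 2·w₂·det(C)·G⁻¹`. -/
theorem hasFDerivAt_invariant_energy
    (G₀ γ₀ : Matrix (Fin 2) (Fin 2) ℝ)
    (hG₀ : IsUnit G₀.det) (hG₀s : G₀.IsSymm) (hγ₀s : γ₀.IsSymm)
    (hG : IsUnit (G₀ + (2 : ℝ) • γ₀).det)
    (w : ℝ × ℝ → ℝ) (w₁ w₂ : ℝ)
    (w' : ℝ × ℝ →L[ℝ] ℝ)
    (hw : HasFDerivAt w w'
      (((G₀ + (2 : ℝ) • γ₀) * G₀⁻¹).trace - 2, ((G₀ + (2 : ℝ) • γ₀) * G₀⁻¹).det - 1))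
    (hw' : ∀ x y : ℝ, w' (x, y) = w₁ * x + w₂ * y) :
    ∃ S' : Matrix (Fin 2) (Fin 2) ℝ →L[ℝ] ℝ,
      HasFDerivAt
        (fun γ : Matrix (Fin 2) (Fin 2) ℝ =>
          w (((G₀ + (2 : ℝ) • γ) * G₀⁻¹).trace - 2, ((G₀ + (2 : ℝ) • γ) * G₀⁻¹).det - 1))
        S' γ₀ ∧
      ∀ K : Matrix (Fin 2) (Fin 2) ℝ,
        S' K = (((2 * w₁) • G₀⁻¹ +
            (2 * w₂ * ((G₀ + (2 : ℝ) • γ₀) * G₀⁻¹).det) • (G₀ + (2 : ℝ) • γ₀)⁻¹)ᵀ *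
          K).trace := by
  set G := G₀ + (2 : ℝ) • γ₀
  set C := G * G₀⁻¹
  have hC := hasFDerivAt_add_smul_mul_const G₀ G₀⁻¹ γ₀ (2 : ℝ)
  have hI₁ :=
    ((traceLinearMap (Fin 2) ℝ ℝ).toContinuousLinearMap.hasFDerivAt.comp γ₀ hC).sub_const 2
  have hI₂ := ((hasFDerivAt_det_fin_two C).comp γ₀ hC).sub_const 1
  refine ⟨_, hw.comp γ₀ (hI₁.prodMk hI₂), fun K => ?_⟩
  have hCdet : IsUnit C.det := by
    rw [det_mul]
    exact hG.mul (isUnit_nonsing_inv_det_iff.2 hG₀)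
  have hS : ((2 * w₁) • G₀⁻¹ + (2 * w₂ * C.det) • G⁻¹).IsSymm :=
    (hG₀s.inv.smul _).add ((hG₀s.add (hγ₀s.smul _)).inv.smul _)
  change w' (((2 : ℝ) • (K * G₀⁻¹)).trace, (C.adjugate * ((2 : ℝ) • (K * G₀⁻¹))).trace) = _
  have hcyclic : (C⁻¹ * (K * G₀⁻¹)).trace = (G⁻¹ * K).trace := trace_inv_mul_mul_inv G K hG₀
  rw [hS.eq, hw', adjugate_eq_det_smul_inv hCdet, Matrix.mul_smul, Matrix.smul_mul, Matrix.add_mul,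
    Matrix.smul_mul, Matrix.smul_mul]
  simp only [trace_add, trace_smul, hcyclic, smul_eq_mul]
  rw [trace_mul_comm K]
  ring
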